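/- arXiv:2001.06696 — 4 statements merged into one kernel-verified Lean document; each statement's English description precedes it below -/
import Mathlib

section
/- Let V be a locally U-small fixed point of the U-powerset, sup : P_U V ≃ V, with membership x ∈ sup(A, f) := fiber f x. Then (V, ∈) has restricted separation: for every x : V and every predicate P : V → Prop_U there exists u : V such that for all z : V, (z ∈ u) ≃ ((z ∈ x) × P z). -/
/- Restricted separation in a locally U-small fixed point of the U-powerset. -/

/- A locally U-small fixed point `sup : P_U V ≃ V`, with
   `x ∈ sup(A,f) := fiber f x`, is a set and the membership is extensional. -/

universe u

/-- Embeddings of a small type into `X`. -/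
def Emb (A : Type u) (X : Type (u + 1)) : Type (u + 1) :=
  {f : A → X // Function.Injective f}

/-- The U-powerset. -/
def PU (X : Type (u + 1)) : Type (u + 1) :=
  Σ A : Type u, Emb A X

/-- `V` is locally U-small. -/
def LocSmall (V : Type (u + 1)) : Prop :=
  ∀ x y : V, Small.{u} (PLift (x = y))

/-- Membership: `x ∈ y` is the fiber over `x` of the embedding presenting `y`. -/
def memV (V : Type (u + 1)) (sup : PU.{u} V ≃ V) (x y : V) : Type u :=
  {a : (sup.symm y).1 // (sup.symm y).2.1 a = x}

theorem restricted_separation (V : Type (u + 1))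
    (hloc : LocSmall.{u} V) (sup : PU.{u} V ≃ V)
    (x : V) (P : V → Prop) :
    ∃ u : V, ∀ z : V,
      Nonempty (memV V sup z u ≃ PProd (memV V sup z x) (P z)) := by
  set A := (sup.symm x).1 with hA
  set f := (sup.symm x).2.1 with hf
  have hinj : Function.Injective f := (sup.symm x).2.2
  let p : PU.{u} V := ⟨{a : A // P (f a)}, fun a => f a.1,
    fun a b h => Subtype.ext (hinj h)⟩
  refine ⟨sup p, fun z => ?_⟩
  have hsp : sup.symm (sup p) = p := sup.symm_apply_apply p
  have e1 : memV V sup z (sup p) ≃ {a : p.1 // p.2.1 a = z} := by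
    unfold memV; rw [hsp]
  refine ⟨e1.trans ?_⟩
  exact {
    toFun := fun a => ⟨⟨a.1.1, a.2⟩, a.2 ▸ a.1.2⟩
    invFun := fun b => ⟨⟨b.1.1, cast (congrArg P b.1.2).symm b.2⟩, b.1.2⟩
    left_inv := fun a => rfl
    right_inv := fun b => rfl }
end

section
/- Let V be a locally U-small fixed point sup : P_U V ≃ V with membership as above, and assume images of small types in locally small types exist in U. Then (V, ∈) satisfies union-replacement: for any u : V and r : ∏ (x : V), x ∈ u → V there is v : V such that for all z : V, (z ∈ v) ≃ ∃ (x : V) (i : x ∈ u), r x i = z. -/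
/- Union-replacement in a locally U-small fixed point of the U-powerset
   (under the assumption, valid in Lean/Mathlib, that images of maps from
   small types are small). -/

/- A locally U-small fixed point `sup : P_U V ≃ V`, with
   `x ∈ sup(A,f) := fiber f x`, is a set and the membership is extensional. -/

universe u

instance memV_subsingleton (V : Type (u + 1)) (sup : PU.{u} V ≃ V) (x y : V) :
    Subsingleton (memV V sup x y) := by
  constructor
  rintro ⟨a, ha⟩ ⟨b, hb⟩
  exact Subtype.ext ((sup.symm y).2.2 (ha.trans hb.symm))

theorem union_replacement (V : Type (u + 1))
    (hloc : LocSmall.{u} V) (sup : PU.{u} V ≃ V)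
    (u : V) (r : ∀ x : V, memV V sup x u → V) :
    ∃ v : V, ∀ z : V,
      Nonempty (memV V sup z v ≃ (∃ x : V, ∃ i : memV V sup x u, r x i = z)) := by
  classical
  let A := (sup.symm u).1
  let f : A → V := (sup.symm u).2.1
  let g : A → V := fun a => r (f a) ⟨a, rfl⟩
  haveI : Small.{u} (Set.range g) := inferInstance
  let W := Shrink (Set.range g)
  let e : W → V := fun w => ((equivShrink (Set.range g)).symm w : V)
  have einj : Function.Injective e := by
    intro a b h
    exact (equivShrink _).symm.injective (Subtype.ext h)
  refine ⟨sup ⟨W, e, einj⟩, fun z => ?_⟩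
  have hs : sup.symm (sup ⟨W, e, einj⟩) = ⟨W, e, einj⟩ := sup.symm_apply_apply _
  have key : memV V sup z (sup ⟨W, e, einj⟩) = {w : W // e w = z} := by
    simp only [memV]; rw [hs]
  haveI : Subsingleton {w : W // e w = z} := by
    constructor
    rintro ⟨a, ha⟩ ⟨b, hb⟩
    exact Subtype.ext (einj (ha.trans hb.symm))
  refine ⟨(Equiv.cast key).trans (equivOfSubsingletonOfSubsingleton ?_ ?_)⟩
  · rintro ⟨w, hw⟩
    have hz : z ∈ Set.range g := hw ▸ ((equivShrink (Set.range g)).symm w).2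
    obtain ⟨a, ha⟩ := hz
    exact ⟨f a, ⟨a, rfl⟩, ha⟩
  · intro h
    have hz : z ∈ Set.range g := by
      obtain ⟨x, i, hr⟩ := h
      obtain ⟨a, ha⟩ := i
      subst ha
      exact ⟨a, hr⟩
    exact ⟨equivShrink (Set.range g) ⟨z, hz⟩, by simp [e]⟩
end

section
/- Let V be a locally U-small fixed point sup : P_U V ≃ V with membership as above, assuming small images. Then (V, ∈) has finite unordered tupling: for every finite type A and v : A → V there is {v} : V with (z ∈ {v}) ≃ ∃ (a : A), v a = z for all z : V. -/
/- Finite unordered tupling in a locally U-small fixed point of the U-powerset. -/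

/- A locally U-small fixed point `sup : P_U V ≃ V`, with
   `x ∈ sup(A,f) := fiber f x`, is a set and the membership is extensional. -/

universe u

theorem finite_tupling (V : Type (u + 1))
    (hloc : LocSmall.{u} V) (sup : PU.{u} V ≃ V)
    (A : Type u) [Finite A] (v : A → V) :
    ∃ t : V, ∀ z : V,
      Nonempty (memV V sup z t ≃ (∃ a : A, v a = z)) := by
  classical
  haveI : Finite (Set.range v) := (Set.finite_range v).to_subtype
  haveI : Small.{u} (Set.range v) := inferInstance
  let B := Shrink.{u} (Set.range v)
  let e : B ≃ Set.range v := (equivShrink _).symm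
  let f : B → V := fun b => (e b : V)
  have hf : Function.Injective f := by
    intro a b h
    exact e.injective (Subtype.ext h)
  refine ⟨sup ⟨B, f, hf⟩, fun z => ⟨?_⟩⟩
  have hs : sup.symm (sup ⟨B, f, hf⟩) = ⟨B, f, hf⟩ := sup.symm_apply_apply _
  unfold memV
  rw [hs]
  haveI : Subsingleton {b : B // f b = z} := by
    constructor
    rintro ⟨a, ha⟩ ⟨b, hb⟩
    exact Subtype.ext (hf (ha.trans hb.symm))
  refine equivOfSubsingletonOfSubsingleton ?_ ?_
  · rintro ⟨b, hb⟩
    obtain ⟨a, ha⟩ := (e b).2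
    exact ⟨a, ha.trans hb⟩
  · intro h
    refine ⟨equivShrink _ ⟨z, h⟩, ?_⟩
    show ((equivShrink (Set.range v)).symm (equivShrink _ ⟨z, h⟩) : V) = z
    simp
end

section
/- In a propositional ∈-structure with empty set, union, singletons and anti-foundation, having a natural number set is not a mere proposition: if x is a Quine atom (x = {x}) and n is a natural number set, then n' := n ∪ {x} is also a natural number set distinct from n (when n is well-founded). -/
/- In a propositional ∈-structure with empty set, union, singletons, having a
   natural number set is not a proposition: if `x` is a Quine atom and `n` is a
   well-founded natural number set, then `n' := n ∪ {x}` is a natural number set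
   distinct from `n`. -/

universe u

/-- `n` is a natural number set: `u ∈ n ↔ u = ∅ ∨ ∃ v ∈ n, u = v ∪ {v}`. -/
def IsNatSet {M : Type u} (mem : M → M → Prop) (empty : M)
    (union : M → M → M) (sing : M → M) (n : M) : Prop :=
  ∀ u : M, mem u n ↔ (u = empty ∨ ∃ v : M, mem v n ∧ u = union v (sing v))

theorem natset_not_unique {M : Type u} (mem : M → M → Prop)
    (empty : M) (union : M → M → M) (sing : M → M)
    (hext : ∀ x y : M, (∀ z : M, mem z x ↔ mem z y) → x = y)
    (hempty : ∀ z : M, ¬ mem z empty)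
    (hunion : ∀ a b z : M, mem z (union a b) ↔ (mem z a ∨ mem z b))
    (hsing : ∀ a z : M, mem z (sing a) ↔ z = a)
    (x n : M)
    (hquine : x = sing x)
    (hnat : IsNatSet mem empty union sing n)
    (hwf : ∀ y : M, mem y n → Acc (fun a b => mem a b) y) :
    IsNatSet mem empty union sing (union n (sing x)) ∧ union n (sing x) ≠ n := by
  have hxx : mem x x := by
    have h := (hsing x x).mpr rfl
    rwa [← hquine] at h
  have hxsing : mem x (sing x) := (hsing x x).mpr rfl
  have hxsucc : x = union x (sing x) := by
    apply hext
    intro z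
    rw [hunion, hsing]
    constructor
    · intro h; exact Or.inl h
    · rintro (h | rfl)
      · exact h
      · exact hxx
  constructor
  · intro u
    rw [hunion]
    constructor
    · rintro (hu | hu)
      · rcases (hnat u).mp hu with h | ⟨v, hv, rfl⟩
        · exact Or.inl h
        · exact Or.inr ⟨v, (hunion n (sing x) v).mpr (Or.inl hv), rfl⟩
      · rw [(hsing x u).mp hu]
        exact Or.inr ⟨x, (hunion n (sing x) x).mpr (Or.inr hxsing), hxsucc⟩
    · rintro (h | ⟨v, hv, rfl⟩)
      · rw [h]; exact Or.inl ((hnat _).mpr (Or.inl rfl))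
      · rcases (hunion n (sing x) v).mp hv with h | h
        · exact Or.inl ((hnat _).mpr (Or.inr ⟨v, h, rfl⟩))
        · right
          have hv' := (hsing x v).mp h
          subst hv'
          rw [← hxsucc]
          exact hxsing
  · intro heq
    have hxn : mem x n := by
      rw [← heq]; exact (hunion n (sing x) x).mpr (Or.inr hxsing)
    have key : ∀ y : M, Acc (fun a b => mem a b) y → mem y y → False := by
      intro y h
      induction h with
      | intro z _ ih => exact fun hzz => ih z hzz hzz
    exact key x (hwf x hxn) hxx
end
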